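/- Let Γ be a finite connected directed multigraph with a balanced weight w: E → ℤ, meaning that at each vertex v the sum of the weights of edges pointing into v equals the sum of the weights of edges pointing out of v. Then the weighted number of oriented spanning trees is independent of the choice of root: N(Γ, w, v_i) = N(Γ, w, v_j) for all vertices v_i, v_j of Γ. -/

import Mathlib

/-- A finite directed multigraph on vertex type `V` with edge type `E`. -/
structure Multidigraph (V E : Type) where
  src : E → V
  tgt : E → V

/-- `T` is an oriented spanning tree of `G` rooted at `r`: every vertex `v ≠ r`
has in-degree 1 in `T`, the root `r` has in-degree 0 in `T`, and `T` contains
no oriented cycle. -/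
def IsOrientedSpanningTree {V E : Type} [Fintype E] [DecidableEq V]
    (G : Multidigraph V E) (r : V) (T : Finset E) : Prop :=
  (∀ v : V, v ≠ r → (T.filter (fun e => G.tgt e = v)).card = 1) ∧
  (T.filter (fun e => G.tgt e = r)).card = 0 ∧
  ¬ ∃ l : List E, l ≠ [] ∧ (∀ e ∈ l, e ∈ T) ∧
      l.Chain' (fun e f => G.tgt e = G.src f) ∧
      ∀ e₁ ∈ l.head?, ∀ e₂ ∈ l.getLast?, G.tgt e₂ = G.src e₁

open Classical in
/-- The weighted number `N(Γ, w, r)` of oriented spanning trees rooted at `r`. -/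
noncomputable def treeCount {V E : Type} [Fintype E] [DecidableEq V]
    (G : Multidigraph V E) (w : E → ℤ) (r : V) : ℤ :=
  ∑ T : Finset E, if IsOrientedSpanningTree G r T then ∏ e ∈ T, w e else 0


/-- Undirected connectivity of the underlying undirected graph. -/
def MConnected {V E : Type} (G : Multidigraph V E) : Prop :=
  ∀ u v : V, Relation.ReflTransGen
    (fun x y => ∃ e : E, (G.src e = x ∧ G.tgt e = y) ∨ (G.src e = y ∧ G.tgt e = x)) u v

/-- A weight is balanced if at each vertex the incoming and outgoing weights agree. -/
def IsBalanced {V E : Type} [Fintype E] [DecidableEq V]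
    (G : Multidigraph V E) (w : E → ℤ) : Prop :=
  ∀ v : V, ∑ e ∈ Finset.univ.filter (fun e => G.tgt e = v), w e
         = ∑ e ∈ Finset.univ.filter (fun e => G.src e = v), w e

/-!
The in-Laplacian `L` of `(Γ, w)` has row `v` equal to `∑_{tgt e = v} w e • (e_v - e_{src e})`.
Its rows always sum to zero, and balance says exactly that its columns do too. For such a matrix
all entries of the adjugate agree: replacing the unit vector `e_i` in a cofactor by `e_i'` changes
the determinant by that of a matrix with zero row sums. By the matrix-tree theorem `N(Γ, w, r)` is
the diagonal entry `adj(L) r r`. Expanding that cofactor multilinearly in the rows, each choice of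
an incoming edge `p v` for every `v ≠ r` contributes `∏ w (p v)` times the determinant of the
matrix with rows `e_v - e_{src (p v)}`; this determinant is `1` if iterating `src ∘ p` leads every
vertex to `r`, which happens exactly when the chosen edges form an oriented spanning tree, and `0`
otherwise.
-/

open Matrix Finset Function

theorem Function.exists_rank_of_forall_exists_iterate_eq {α : Type*} {f : α → α} {r : α}
    (h : ∀ v, ∃ k, f^[k] v = r) : ∃ d : α → ℕ, ∀ v, v ≠ r → d (f v) < d v := by
  classical
  refine ⟨fun v => Nat.find (h v), fun v hv => ?_⟩
  obtain ⟨k, hk⟩ := Nat.exists_eq_add_one_of_ne_zero fun h0 : Nat.find (h v) = 0 =>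
    hv (by simpa [h0] using Nat.find_spec (h v))
  have hfk : f^[k] (f v) = r := by simpa [hk] using Nat.find_spec (h v)
  exact (Nat.find_le hfk).trans_lt (by simp only [hk, Nat.lt_add_one])

theorem Function.exists_isPeriodicPt_iterate {α : Type*} [Finite α] (f : α → α) (x : α) :
    ∃ i m, 0 < m ∧ IsPeriodicPt f m (f^[i] x) := by
  obtain ⟨i, j, hij, heq⟩ := Finite.exists_ne_map_eq_of_infinite fun k : ℕ => f^[k] x
  rcases hij.lt_or_gt with hlt | hlt
  · refine ⟨i, j - i, Nat.sub_pos_of_lt hlt, ?_⟩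
    rw [IsPeriodicPt, IsFixedPt, ← iterate_add_apply, Nat.sub_add_cancel hlt.le]
    exact heq.symm
  · refine ⟨j, i - j, Nat.sub_pos_of_lt hlt, ?_⟩
    rw [IsPeriodicPt, IsFixedPt, ← iterate_add_apply, Nat.sub_add_cancel hlt.le]
    exact heq

namespace Matrix

variable {n R : Type*} [Fintype n] [DecidableEq n] [CommRing R]

theorem det_eq_zero_of_sum_row_eq_zero [Nonempty n] {A : Matrix n n R}
    (h : ∀ i, ∑ j, A i j = 0) : A.det = 0 :=
  det_eq_zero_of_mulVec_eq_zero_of_mem_nonZeroDivisors (v := 1) (i := Classical.arbitrary n)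
    (funext fun i => by simpa [mulVec, dotProduct] using h i) (one_mem _)

theorem adjugate_apply_eq_of_sum_row_eq_zero {A : Matrix n n R}
    (h : ∀ i, ∑ j, A i j = 0) (i i' j : n) : adjugate A i j = adjugate A i' j := by
  have : Nonempty n := ⟨j⟩
  have hsplit : (Pi.single i 1 : n → R) = (Pi.single i 1 - Pi.single i' 1) + Pi.single i' 1 :=
    (sub_add_cancel _ _).symm
  rw [adjugate_apply, adjugate_apply, hsplit, det_updateRow_add, add_eq_right]
  refine det_eq_zero_of_sum_row_eq_zero fun k => ?_
  rcases eq_or_ne k j with rfl | hk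
  · simp [Finset.sum_sub_distrib]
  · simpa [updateRow_ne hk] using h k

theorem adjugate_apply_eq_of_sum_eq_zero {A : Matrix n n R}
    (hrow : ∀ i, ∑ j, A i j = 0) (hcol : ∀ j, ∑ i, A i j = 0) (i j i' j' : n) :
    adjugate A i j = adjugate A i' j' := by
  have hcol' : adjugate A i' j = adjugate A i' j' := by
    simpa [← adjugate_transpose] using
      adjugate_apply_eq_of_sum_row_eq_zero (A := Aᵀ) hcol j j' i'
  exact (adjugate_apply_eq_of_sum_row_eq_zero hrow i i' j).trans hcol'

end Matrix

section ParentMatrix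

variable {n R : Type*} [Fintype n] [DecidableEq n] [CommRing R]

def parentMatrix (r : n) (f : n → n) : Matrix n n R :=
  of fun v => if v = r then Pi.single r 1 else Pi.single v 1 - Pi.single (f v) 1

-- The rows indexed by `p` are supported on `p` and sum to zero there.
theorem det_parentMatrix_of_invariant {r : n} {f : n → n} {p : n → Prop} [DecidablePred p]
    (hp : ∃ v, p v) (hr : ¬ p r) (hf : ∀ v, p v → p (f v)) :
    (parentMatrix r f : Matrix n n R).det = 0 := by
  obtain ⟨v₀, hv₀⟩ := hp
  have : Nonempty {v // p v} := ⟨⟨v₀, hv₀⟩⟩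
  rw [twoBlockTriangular_det' _ p fun v hv u hu => ?_,
    det_eq_zero_of_sum_row_eq_zero fun v => ?_, zero_mul]
  · obtain ⟨v, hv⟩ := v
    have hvr : v ≠ r := by rintro rfl; exact hr hv
    simp only [toSquareBlockProp, toBlock_apply, parentMatrix, of_apply, if_neg hvr]
    rw [← Finset.sum_subtype (univ.filter p) (by simp)]
    simp [Finset.sum_sub_distrib, hv, hf v hv]
  · have hvr : v ≠ r := by rintro rfl; exact hr hv
    have huv : u ≠ v := by rintro rfl; exact hu hv
    have hufv : u ≠ f v := by rintro rfl; exact hu (hf v hv)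
    simp [parentMatrix, hvr, huv, hufv]

-- Ordering `n` lexicographically by `(d, index)` makes the matrix unitriangular.
theorem det_parentMatrix_of_rank {r : n} {f : n → n} (d : n → ℕ)
    (hd : ∀ v, v ≠ r → d (f v) < d v) : (parentMatrix r f : Matrix n n R).det = 1 := by
  let key : n → ℕ ×ₗ Fin (Fintype.card n) := fun v => toLex (d v, Fintype.equivFin n v)
  let : LinearOrder n := LinearOrder.lift' key fun a b hab =>
    (Fintype.equivFin n).injective (Prod.ext_iff.1 (toLex.injective hab)).2
  have hf : ∀ v, v ≠ r → f v < v := fun v hv => Prod.Lex.toLex_lt_toLex.2 (Or.inl (hd v hv))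
  rw [det_of_isLowerTriangular _ fun v u (hvu : v < u) => ?_]
  · refine prod_eq_one fun v _ => ?_
    by_cases hv : v = r
    · simp [parentMatrix, hv]
    · simp [parentMatrix, hv, (hf v hv).ne']
  · have huv : u ≠ v := hvu.ne'
    by_cases hv : v = r
    · simp [parentMatrix, hv, hv ▸ huv]
    · simp [parentMatrix, hv, huv, ((hf v hv).trans hvu).ne']

open Classical in
theorem det_parentMatrix (r : n) (f : n → n) :
    (parentMatrix r f : Matrix n n R).det = if ∀ v, ∃ k, f^[k] v = r then 1 else 0 := by
  split_ifs with h
  · obtain ⟨d, hd⟩ := Function.exists_rank_of_forall_exists_iterate_eq h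
    exact det_parentMatrix_of_rank d hd
  · push Not at h
    refine det_parentMatrix_of_invariant (p := fun v => ∀ k, f^[k] v ≠ r) h (fun h => h 0 rfl)
      fun v hv k => ?_
    simpa only [← iterate_succ_apply] using hv (k + 1)

end ParentMatrix

namespace Multidigraph

variable {V E : Type} [DecidableEq V] (G : Multidigraph V E)

theorem treeCount_eq_zero_of_isEmpty [Fintype E] [IsEmpty E] (w : E → ℤ) {r v : V}
    (hv : v ≠ r) : treeCount G w r = 0 :=
  sum_eq_zero fun T _ => if_neg fun hT => by simpa [eq_empty_of_isEmpty T] using hT.1 v hv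

variable [Fintype V]

section Cycles

variable [DecidableEq E] {G} {r : V} {p : V → E}

theorem card_filter_tgt_image (hp : ∀ v, v ≠ r → G.tgt (p v) = v) (v : V) :
    #(((univ.erase r).image p).filter (fun e => G.tgt e = v)) = if v = r then 0 else 1 := by
  have hfilter :
      (univ.erase r).filter (fun u => G.tgt (p u) = v) = (univ.erase r).filter (· = v) :=
    filter_congr fun u hu => by rw [hp u (ne_of_mem_erase hu)]
  rw [filter_image, hfilter, filter_eq']
  by_cases hv : v = r <;> simp [hv]

-- A rank decreasing along parents would strictly increase along the cycle.
theorem not_forall_reaches_of_cycle (hp : ∀ v, v ≠ r → G.tgt (p v) = v) {l : List E}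
    (hl : l ≠ []) (hmem : ∀ e ∈ l, e ∈ (univ.erase r).image p)
    (hchain : l.IsChain fun e f => G.tgt e = G.src f)
    (hwrap : ∀ e₁ ∈ l.head?, ∀ e₂ ∈ l.getLast?, G.tgt e₂ = G.src e₁) :
    ¬ ∀ v, ∃ k, (G.src ∘ p)^[k] v = r := by
  intro hreach
  obtain ⟨d, hd⟩ := Function.exists_rank_of_forall_exists_iterate_eq hreach
  have hparent : ∀ e ∈ l, G.tgt e ≠ r ∧ p (G.tgt e) = e := by
    intro e he
    obtain ⟨u, hu, rfl⟩ := mem_image.1 (hmem e he)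
    rw [hp u (ne_of_mem_erase hu)]
    exact ⟨ne_of_mem_erase hu, rfl⟩
  have hstep : ∀ e f, f ∈ l → G.tgt e = G.src f → d (G.tgt e) < d (G.tgt f) := by
    intro e f hf hef
    have := hd _ (hparent f hf).1
    rwa [Function.comp_apply, (hparent f hf).2, ← hef] at this
  have hmono : ∀ e ∈ l, d (G.tgt (l.head hl)) ≤ d (G.tgt e) :=
    (hchain.imp_of_mem_imp fun e f _ hf hef => hstep e f hf hef).induction _ _
      (fun _ _ h h' => h'.trans h.le) fun _ => le_rfl
  have hlast := hstep _ _ (List.head_mem hl)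
    (hwrap _ (List.head?_eq_some_head hl) _ (List.getLast?_eq_some_getLast hl))
  exact (hmono _ (List.getLast_mem hl)).not_gt hlast

-- The cycle through a periodic point `y` of `src ∘ p`, listed backwards.
theorem exists_cycle_of_not_forall_reaches (hp : ∀ v, v ≠ r → G.tgt (p v) = v)
    (h : ¬ ∀ v, ∃ k, (G.src ∘ p)^[k] v = r) :
    ∃ l : List E, l ≠ [] ∧ (∀ e ∈ l, e ∈ (univ.erase r).image p) ∧
      l.IsChain (fun e f => G.tgt e = G.src f) ∧
      ∀ e₁ ∈ l.head?, ∀ e₂ ∈ l.getLast?, G.tgt e₂ = G.src e₁ := by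
  set f := G.src ∘ p
  push Not at h
  obtain ⟨x, hx⟩ := h
  obtain ⟨i, m, hm, hper⟩ := Function.exists_isPeriodicPt_iterate f x
  set y := f^[i] x
  have hy : ∀ k, f^[k] y ≠ r := fun k => by
    simpa only [y, ← iterate_add_apply] using hx (k + i)
  have htgt : ∀ k, G.tgt (p (f^[k] y)) = f^[k] y := fun k => hp _ (hy k)
  obtain ⟨n, rfl⟩ := Nat.exists_eq_add_one_of_ne_zero hm.ne'
  refine ⟨((List.range (n + 1)).reverse.map fun k => p (f^[k] y)), by simp, ?_, ?_, ?_⟩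
  · intro e he
    obtain ⟨k, -, rfl⟩ := List.mem_map.1 he
    exact mem_image_of_mem _ (mem_erase.2 ⟨hy k, mem_univ _⟩)
  · rw [List.isChain_map, List.isChain_reverse, List.isChain_range_succ]
    intro k _
    rw [htgt, iterate_succ_apply']
    rfl
  · have hlast : (List.range (n + 1)).getLast? = some n := by
      rw [List.range_succ, List.getLast?_concat]
    have hhead : (List.range (n + 1)).head? = some 0 := by
      rw [List.range_succ_eq_map]
      rfl
    simp only [List.head?_map, List.getLast?_map, List.head?_reverse, List.getLast?_reverse,
      hlast, hhead, Option.map_some, Option.mem_def, Option.some.injEq]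
    rintro _ rfl _ rfl
    rw [htgt]
    exact hper.symm.trans (iterate_succ_apply' f n y)

variable [Fintype E]

theorem isOrientedSpanningTree_image_iff (hp : ∀ v, v ≠ r → G.tgt (p v) = v) :
    IsOrientedSpanningTree G r ((univ.erase r).image p) ↔
      ∀ v, ∃ k, (G.src ∘ p)^[k] v = r := by
  simp only [IsOrientedSpanningTree, card_filter_tgt_image hp]
  constructor
  · rintro ⟨-, -, hcycle⟩
    by_contra h
    exact hcycle (exists_cycle_of_not_forall_reaches hp h)
  · intro hreach
    refine ⟨fun v hv => if_neg hv, if_true _ _, ?_⟩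
    rintro ⟨l, hl, hmem, hchain, hwrap⟩
    exact not_forall_reaches_of_cycle hp hl hmem hchain hwrap hreach

end Cycles

variable [Fintype E]

def laplacian (w : E → ℤ) : Matrix V V ℤ :=
  of fun v => ∑ e ∈ univ.filter (fun e => G.tgt e = v),
    w e • (Pi.single (G.tgt e) 1 - Pi.single (G.src e) 1)

theorem sum_laplacian_row (w : E → ℤ) (v : V) : ∑ u, G.laplacian w v u = 0 := by
  simp [laplacian, Finset.sum_apply, Finset.sum_comm (γ := V), ← Finset.mul_sum,
    Finset.sum_sub_distrib]

theorem sum_laplacian_col {w : E → ℤ} (hbal : IsBalanced G w) (u : V) :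
    ∑ v, G.laplacian w v u = 0 := by
  simp only [laplacian, of_apply, Finset.sum_apply]
  rw [Finset.sum_fiberwise]
  simp [mul_sub, Finset.sum_sub_distrib, Pi.single_apply, eq_comm (a := u), ← Finset.sum_filter,
    hbal u]

-- The dummy value `e₀` at the root matches the unit row `e_r` of the cofactor.
def parentFunctions (r : V) (e₀ : E) : Finset (V → E) :=
  Fintype.piFinset fun v => if v = r then {e₀} else univ.filter (fun e => G.tgt e = v)

theorem mem_parentFunctions {r : V} {e₀ : E} {p : V → E} :
    p ∈ G.parentFunctions r e₀ ↔ p r = e₀ ∧ ∀ v, v ≠ r → G.tgt (p v) = v := by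
  simp only [parentFunctions, Fintype.mem_piFinset]
  constructor
  · intro h
    exact ⟨by simpa using h r, fun v hv => by simpa [hv] using h v⟩
  · rintro ⟨hr, hp⟩ v
    by_cases hv : v = r
    · simp [hv, hr]
    · simp [hv, hp v hv]

theorem exists_mem_parentFunctions_image_eq [DecidableEq E] {r : V} {T : Finset E} (e₀ : E)
    (hT : IsOrientedSpanningTree G r T) :
    ∃ p ∈ G.parentFunctions r e₀, (univ.erase r).image p = T := by
  have hchoice : ∀ v, ∃ e, (v = r → e = e₀) ∧
      (v ≠ r → T.filter (fun e => G.tgt e = v) = {e}) := by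
    intro v
    by_cases hv : v = r
    · exact ⟨e₀, fun _ => rfl, fun h => absurd hv h⟩
    · obtain ⟨e, he⟩ := card_eq_one.1 (hT.1 v hv)
      exact ⟨e, fun h => absurd h hv, fun _ => he⟩
  choose p hpr hpT using hchoice
  have hmem : ∀ v, v ≠ r → p v ∈ T ∧ G.tgt (p v) = v := fun v hv =>
    mem_filter.1 ((hpT v hv).symm ▸ mem_singleton_self (p v))
  refine ⟨p, G.mem_parentFunctions.2 ⟨hpr r rfl, fun v hv => (hmem v hv).2⟩, ?_⟩
  ext e
  simp only [mem_image, mem_erase, mem_univ, and_true]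
  constructor
  · rintro ⟨v, hv, rfl⟩
    exact (hmem v hv).1
  · intro he
    have hroot : G.tgt e ≠ r := by
      intro h
      have hr : e ∈ T.filter (fun e => G.tgt e = r) := mem_filter.2 ⟨he, h⟩
      exact notMem_empty e (card_eq_zero.1 hT.2.1 ▸ hr)
    have hparent : e ∈ T.filter (fun e' => G.tgt e' = G.tgt e) := mem_filter.2 ⟨he, rfl⟩
    rw [hpT _ hroot, mem_singleton] at hparent
    exact ⟨G.tgt e, hroot, hparent.symm⟩

theorem det_updateRow_laplacian (w : E → ℤ) (r : V) (e₀ : E) :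
    ((G.laplacian w).updateRow r (Pi.single r 1)).det =
      ∑ p ∈ G.parentFunctions r e₀, (∏ v ∈ univ.erase r, w (p v)) *
        (parentMatrix r (G.src ∘ p)).det := by
  let A : V → Finset E := fun v => if v = r then {e₀} else univ.filter (fun e => G.tgt e = v)
  let g : V → E → V → ℤ := fun v e =>
    if v = r then Pi.single r 1 else w e • (Pi.single v 1 - Pi.single (G.src e) 1)
  have hrows : (G.laplacian w).updateRow r (Pi.single r 1) = of fun v => ∑ e ∈ A v, g v e := by
    ext v u
    by_cases hv : v = r
    · simp [A, g, hv]
    · simp only [updateRow_ne hv, laplacian, of_apply, A, g, if_neg hv, Finset.sum_apply]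
      exact sum_congr rfl fun e he => by rw [(mem_filter.1 he).2]
  have hterm : ∀ p : V → E, (of fun v => g v (p v)) =
      of fun v u => (if v = r then 1 else w (p v)) * parentMatrix r (G.src ∘ p) v u := by
    intro p
    ext v u
    by_cases hv : v = r <;> simp [g, parentMatrix, hv]
  rw [hrows]
  refine ((detRowAlternating : (V → ℤ) [⋀^V]→ₗ[ℤ] ℤ).map_sum_finset g A).trans
    (sum_congr rfl fun p _ => ?_)
  change (of fun v => g v (p v)).det = _
  rw [hterm, det_mul_column, ← mul_prod_erase univ _ (mem_univ r), if_pos rfl, one_mul]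
  exact congrArg (· * _) (prod_congr rfl fun v hv => if_neg (ne_of_mem_erase hv))

open Classical in
theorem treeCount_eq_sum_parentFunctions [DecidableEq E] (w : E → ℤ) (r : V) (e₀ : E) :
    treeCount G w r = ∑ p ∈ G.parentFunctions r e₀,
      if ∀ v, ∃ k, (G.src ∘ p)^[k] v = r then ∏ v ∈ univ.erase r, w (p v) else 0 := by
  rw [treeCount, ← sum_filter, ← sum_filter]
  symm
  refine sum_nbij (fun p => (univ.erase r).image p) (fun p hp => ?_) (fun p hp q hq hpq => ?_)
    (fun T hT => ?_) (fun p hp => ?_)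
  · obtain ⟨hp, hreach⟩ := mem_filter.1 hp
    exact mem_filter.2 ⟨mem_univ _,
      (isOrientedSpanningTree_image_iff (G.mem_parentFunctions.1 hp).2).2 hreach⟩
  · obtain ⟨hpr, hp⟩ := G.mem_parentFunctions.1 (mem_filter.1 hp).1
    obtain ⟨hqr, hq⟩ := G.mem_parentFunctions.1 (mem_filter.1 hq).1
    funext v
    by_cases hv : v = r
    · rw [hv, hpr, hqr]
    · have hpv : p v ∈ (univ.erase r).image p :=
        mem_image_of_mem p (mem_erase.2 ⟨hv, mem_univ v⟩)
      rw [show (univ.erase r).image p = (univ.erase r).image q from hpq] at hpv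
      obtain ⟨u, hu, hqu⟩ := mem_image.1 hpv
      rw [← hqu, ← hp v hv, ← hqu, hq u (ne_of_mem_erase hu)]
  · obtain ⟨p, hp, rfl⟩ := G.exists_mem_parentFunctions_image_eq e₀ (mem_filter.1 hT).2
    refine ⟨p, mem_filter.2 ⟨hp, ?_⟩, rfl⟩
    exact (isOrientedSpanningTree_image_iff (G.mem_parentFunctions.1 hp).2).1 (mem_filter.1 hT).2
  · have hp := (G.mem_parentFunctions.1 (mem_filter.1 hp).1).2
    refine (prod_image fun u hu v hv huv => ?_).symm
    rw [← hp u (ne_of_mem_erase hu), ← hp v (ne_of_mem_erase hv), huv]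

theorem treeCount_eq_adjugate_laplacian [Nonempty E] (w : E → ℤ) (r : V) :
    treeCount G w r = adjugate (G.laplacian w) r r := by
  classical
  obtain ⟨e₀⟩ := ‹Nonempty E›
  rw [adjugate_apply, det_updateRow_laplacian G w r e₀,
    treeCount_eq_sum_parentFunctions G w r e₀]
  refine sum_congr rfl fun p _ => ?_
  rw [det_parentMatrix]
  split_ifs <;> simp

end Multidigraph

theorem treeCount_root_independent_general {V E : Type} [Fintype V] [Fintype E] [DecidableEq V]
    (G : Multidigraph V E) (w : E → ℤ)
    (hbal : IsBalanced G w)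
    (v₁ v₂ : V) :
    treeCount G w v₁ = treeCount G w v₂ := by
  rcases eq_or_ne v₁ v₂ with rfl | hne
  · rfl
  cases isEmpty_or_nonempty E
  · rw [G.treeCount_eq_zero_of_isEmpty w hne.symm, G.treeCount_eq_zero_of_isEmpty w hne]
  · rw [G.treeCount_eq_adjugate_laplacian, G.treeCount_eq_adjugate_laplacian]
    exact adjugate_apply_eq_of_sum_eq_zero (G.sum_laplacian_row w) (G.sum_laplacian_col hbal) ..

/-- For a finite connected directed multigraph with a balanced weight, the weighted
number of oriented spanning trees is independent of the choice of root. -/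
theorem treeCount_root_independent {V E : Type} [Fintype V] [Fintype E] [DecidableEq V]
    (G : Multidigraph V E) (w : E → ℤ)
    (hconn : MConnected G) (hbal : IsBalanced G w)
    (v₁ v₂ : V) :
    treeCount G w v₁ = treeCount G w v₂ :=
  treeCount_root_independent_general G w hbal v₁ v₂
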